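/- In the Poisson prior case, the second-order posterior factorial moment density satisfies ρ²_{Φ|Ξ=z_{1:m}}(x,y) = q_d² + q_d Σ_{k=1}^m (ℓ_k(x)+ℓ_k(y))/s_k + Σ_{r≠p} ℓ_r(x)ℓ_p(y)/(s_r s_p), where ℓ_k(x) = p_d l_d(z_k|x) and s_k = l_c(z_k) + ∫_Λ p_d l_d(z_k|u) ν(du). -/

import Mathlib

open MeasureTheory Finset

variable {Λ : Type*} [MeasurableSpace Λ]

/-- The Janossy density `j^(m)_Ξ` of the measurement process restricted to the
configuration points indexed by `T ⊆ {1,…,m}`, for a hidden process with Janossy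
densities `jf`, clutter intensity `lc`, detection probability `pd` and
displacement likelihood `ld`. -/
noncomputable def jXi (ν : Measure Λ) [SigmaFinite ν] (lc : Λ → ℝ) (pd : ℝ)
    (ld : Λ → Λ → ℝ) (jf : (n : ℕ) → (Fin n → Λ) → ℝ)
    {m : ℕ} (z : Fin m → Λ) (T : Finset (Fin m)) : ℝ :=
  ∑' p : ℕ, ∑ S ∈ T.powerset,
    if hS : S.card ≤ p then
      (∏ j ∈ T \ S, lc (z j)) *
        ((1 - pd) ^ (p - S.card) / (Nat.factorial (p - S.card) : ℝ)) *
        ∫ u : Fin p → Λ, jf p u *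
          ∏ k : Fin S.card, pd * ld (z (S.orderEmbOfFin rfl k)) (u (Fin.castLE hS k))
          ∂Measure.pi (fun _ : Fin p => ν)
    else 0

/-- The first-order corrector term `Υ¹_{z_T}(x)`. -/
noncomputable def ups1 (ν : Measure Λ) [SigmaFinite ν] (lc : Λ → ℝ) (pd : ℝ)
    (ld : Λ → Λ → ℝ) (jf : (n : ℕ) → (Fin n → Λ) → ℝ)
    {m : ℕ} (z : Fin m → Λ) (T : Finset (Fin m)) (x : Λ) : ℝ :=
  ∑' p : ℕ, ∑ S ∈ T.powerset,
    if hS : S.card ≤ p then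
      (∏ j ∈ T \ S, lc (z j)) *
        ((1 - pd) ^ (p - S.card) / (Nat.factorial (p - S.card) : ℝ)) *
        ∫ u : Fin p → Λ, jf (p + 1) (Fin.snoc u x) *
          ∏ k : Fin S.card, pd * ld (z (S.orderEmbOfFin rfl k)) (u (Fin.castLE hS k))
          ∂Measure.pi (fun _ : Fin p => ν)
    else 0

/-- The second-order corrector term `Υ²_{z_T}(x,y)`. -/
noncomputable def ups2 (ν : Measure Λ) [SigmaFinite ν] (lc : Λ → ℝ) (pd : ℝ)
    (ld : Λ → Λ → ℝ) (jf : (n : ℕ) → (Fin n → Λ) → ℝ)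
    {m : ℕ} (z : Fin m → Λ) (T : Finset (Fin m)) (x y : Λ) : ℝ :=
  ∑' p : ℕ, ∑ S ∈ T.powerset,
    if hS : S.card ≤ p then
      (∏ j ∈ T \ S, lc (z j)) *
        ((1 - pd) ^ (p - S.card) / (Nat.factorial (p - S.card) : ℝ)) *
        ∫ u : Fin p → Λ, jf (p + 2) (Fin.snoc (Fin.snoc u x) y) *
          ∏ k : Fin S.card, pd * ld (z (S.orderEmbOfFin rfl k)) (u (Fin.castLE hS k))
          ∂Measure.pi (fun _ : Fin p => ν)
    else 0

/-! For a Poisson prior every Janossy density is the constant `exp (-ν Λ)`, so each corrector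
`Υ²_{z_T}` coincides with `j_Ξ(z_T)`. In `j_Ξ(z_T)` the sum over the number `p - |S|` of
undetected points is an exponential series, and the remaining sum over the detected subsets
`S ⊆ T` is the expansion of `∏_{k ∈ T} (l_c(z_k) + ∫ p_d l_d(z_k|u) ν(du))`. Hence
`j_Ξ(z_T) = exp (-p_d ν Λ) ∏_{k ∈ T} s_k`, and every ratio in `ρ²` is a product of `1 / s_k`. -/

theorem hasSum_shifted_exp_series (A c : ℝ) (n : ℕ) :
    HasSum (fun p : ℕ => if n ≤ p then A * c ^ (p - n) / (p - n).factorial else 0)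
      (A * Real.exp c) := by
  rw [← (add_left_injective n).hasSum_iff fun p hp =>
    if_neg fun h => hp ⟨p - n, Nat.sub_add_cancel h⟩]
  simpa [Function.comp_def, mul_div_assoc, Real.exp_eq_exp_ℝ] using
    (NormedSpace.expSeries_div_hasSum_exp c).mul_left A

theorem Finset.prod_orderEmbOfFin {α M : Type*} [LinearOrder α] [CommMonoid M]
    (S : Finset α) (f : α → M) :
    ∏ k : Fin S.card, f (S.orderEmbOfFin rfl k) = ∏ j ∈ S, f j := by
  rw [← Finset.prod_coe_sort S f, ← (S.orderIsoOfFin rfl).toEquiv.prod_comp]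
  rfl

theorem integral_prod_castAdd (ν : Measure Λ) [SigmaFinite ν] {n : ℕ} (r : ℕ)
    (f : Fin n → Λ → ℝ) :
    ∫ u : Fin (n + r) → Λ, ∏ k, f k (u (Fin.castAdd r k)) ∂Measure.pi (fun _ => ν) =
      (∏ k, ∫ v, f k v ∂ν) * (ν Set.univ).toReal ^ r := by
  have h := integral_fintype_prod_eq_prod (μ := fun _ : Fin (n + r) => ν)
    (Fin.append f fun _ _ => (1 : ℝ))
  simp only [Fin.prod_univ_add, Fin.append_left, Fin.append_right, prod_const_one, mul_one,
    integral_const, smul_eq_mul, prod_const, card_univ, Fintype.card_fin] at h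
  rw [h, measureReal_def]

theorem jXi_of_jf_const (ν : Measure Λ) [SigmaFinite ν] (lc : Λ → ℝ) (pd : ℝ)
    (ld : Λ → Λ → ℝ) {jf : (n : ℕ) → (Fin n → Λ) → ℝ} {c : ℝ} (hjf : ∀ n u, jf n u = c)
    {m : ℕ} (z : Fin m → Λ) (T : Finset (Fin m)) :
    jXi ν lc pd ld jf z T = c * Real.exp ((1 - pd) * (ν Set.univ).toReal) *
      ∏ k ∈ T, (lc (z k) + ∫ u, pd * ld (z k) u ∂ν) := by
  set A : Finset (Fin m) → ℝ := fun S =>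
    c * ((∏ j ∈ S, ∫ u, pd * ld (z j) u ∂ν) * ∏ j ∈ T \ S, lc (z j))
  have hterm : ∀ (p : ℕ) (S : Finset (Fin m)),
      (if hS : S.card ≤ p then
        (∏ j ∈ T \ S, lc (z j)) *
          ((1 - pd) ^ (p - S.card) / (Nat.factorial (p - S.card) : ℝ)) *
          ∫ u : Fin p → Λ, jf p u *
            ∏ k : Fin S.card, pd * ld (z (S.orderEmbOfFin rfl k)) (u (Fin.castLE hS k))
            ∂Measure.pi (fun _ : Fin p => ν)
        else 0) =
      if S.card ≤ p then
        A S * ((1 - pd) * (ν Set.univ).toReal) ^ (p - S.card) / (p - S.card).factorial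
      else 0 := by
    intro p S
    split_ifs with hS
    · obtain ⟨r, rfl⟩ := Nat.exists_eq_add_of_le hS
      simp only [hjf, integral_const_mul, Nat.add_sub_cancel_left]
      erw [integral_prod_castAdd ν r fun k v => pd * ld (z (S.orderEmbOfFin rfl k)) v,
        Finset.prod_orderEmbOfFin S fun j => ∫ v, pd * ld (z j) v ∂ν]
      simp only [A, mul_pow]
      ring
    · rfl
  unfold jXi
  simp only [hterm]
  rw [(hasSum_sum fun S _ => hasSum_shifted_exp_series (A S) _ S.card).tsum_eq,
    ← Finset.sum_mul, ← Finset.mul_sum, ← Finset.prod_add]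
  simp only [add_comm]
  ring

theorem ups2_eq_jXi_of_jf_const (ν : Measure Λ) [SigmaFinite ν] (lc : Λ → ℝ) (pd : ℝ)
    (ld : Λ → Λ → ℝ) {jf : (n : ℕ) → (Fin n → Λ) → ℝ} {c : ℝ} (hjf : ∀ n u, jf n u = c)
    {m : ℕ} (z : Fin m → Λ) (T : Finset (Fin m)) (x y : Λ) :
    ups2 ν lc pd ld jf z T x y = jXi ν lc pd ld jf z T := by
  simp only [ups2, jXi, hjf]

theorem jXi_sdiff_div_jXi_univ (ν : Measure Λ) [SigmaFinite ν] (lc : Λ → ℝ) (pd : ℝ)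
    (ld : Λ → Λ → ℝ) {jf : (n : ℕ) → (Fin n → Λ) → ℝ} {c : ℝ} (hjf : ∀ n u, jf n u = c)
    (hc : c ≠ 0) {m : ℕ} (z : Fin m → Λ) (hs : ∀ k, lc (z k) + ∫ u, pd * ld (z k) u ∂ν ≠ 0)
    (T : Finset (Fin m)) :
    jXi ν lc pd ld jf z (univ \ T) / jXi ν lc pd ld jf z univ =
      (∏ k ∈ T, (lc (z k) + ∫ u, pd * ld (z k) u ∂ν))⁻¹ := by
  rw [jXi_of_jf_const ν lc pd ld hjf, jXi_of_jf_const ν lc pd ld hjf,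
    ← prod_mul_prod_compl T, compl_eq_univ_sdiff]
  have := Real.exp_ne_zero ((1 - pd) * (ν Set.univ).toReal)
  have := prod_ne_zero_iff.mpr fun k (_ : k ∈ univ \ T) => hs k
  field_simp

theorem poisson_posterior_second_moment_general (ν : Measure Λ) [IsFiniteMeasure ν]
    (pd : ℝ)
    (lc : Λ → ℝ) (ld : Λ → Λ → ℝ)
    (jf : (n : ℕ) → (Fin n → Λ) → ℝ)
    (hjf : ∀ (n : ℕ) (u : Fin n → Λ), jf n u = Real.exp (-(ν Set.univ).toReal))
    {m : ℕ} (z : Fin m → Λ)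
    (hpos : ∀ k, 0 < lc (z k) + ∫ u, pd * ld (z k) u ∂ν)
    (ρ : Λ → Λ → ℝ)
    (hρ : ∀ x y, ρ x y =
      ((1 - pd) ^ 2 * ups2 ν lc pd ld jf z Finset.univ x y +
          (1 - pd) * ∑ k : Fin m, (pd * ld (z k) x + pd * ld (z k) y) *
            ups2 ν lc pd ld jf z (Finset.univ \ {k}) x y +
          ∑ k : Fin m, ∑ k' : Fin m,
            if k ≠ k' then
              (pd * ld (z k) x) * (pd * ld (z k') y) *
                ups2 ν lc pd ld jf z (Finset.univ \ {k, k'}) x y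
            else 0)
        / jXi ν lc pd ld jf z Finset.univ) :
    ∀ x y, ρ x y = (1 - pd) ^ 2 +
      (1 - pd) * (∑ k : Fin m, (pd * ld (z k) x + pd * ld (z k) y) /
        (lc (z k) + ∫ u, pd * ld (z k) u ∂ν)) +
      ∑ k : Fin m, ∑ k' : Fin m,
        if k ≠ k' then
          (pd * ld (z k) x) * (pd * ld (z k') y) /
            ((lc (z k) + ∫ u, pd * ld (z k) u ∂ν) *
              (lc (z k') + ∫ u, pd * ld (z k') u ∂ν))
        else 0 := by
  intro x y
  have hratio := jXi_sdiff_div_jXi_univ ν lc pd ld hjf (Real.exp_ne_zero _) z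
    fun k => (hpos k).ne'
  have hJ : jXi ν lc pd ld jf z univ ≠ 0 := by
    simpa using hratio ∅
  rw [hρ, add_div, add_div, mul_div_assoc, mul_div_assoc, sum_div, sum_div]
  simp only [ups2_eq_jXi_of_jf_const ν lc pd ld hjf, div_self hJ, mul_one]
  congr 1
  · congr 2
    refine sum_congr rfl fun k _ => ?_
    rw [mul_div_assoc, hratio, prod_singleton, div_eq_mul_inv]
  · refine sum_congr rfl fun k _ => ?_
    rw [sum_div]
    refine sum_congr rfl fun k' _ => ?_
    split_ifs with hkk'
    · rw [mul_div_assoc, hratio, prod_pair hkk', div_eq_mul_inv]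
    · exact zero_div _

/-- Poisson prior case: the second-order posterior factorial moment density of `Φ`
given `Ξ = (z_1,…,z_m)`, defined via the second-order corrector terms, satisfies
`ρ²_{Φ|Ξ}(x,y) = q_d² + q_d Σ_k (ℓ_k(x)+ℓ_k(y))/s_k + Σ_{r≠p} ℓ_r(x)ℓ_p(y)/(s_r s_p)`,
where `ℓ_k(x) = p_d l_d(z_k|x)` and `s_k = l_c(z_k) + ∫ p_d l_d(z_k|u) ν(du)`. -/
theorem poisson_posterior_second_moment (ν : Measure Λ) [IsFiniteMeasure ν]
    (pd : ℝ) (hpd0 : 0 ≤ pd) (hpd1 : pd ≤ 1)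
    (lc : Λ → ℝ) (ld : Λ → Λ → ℝ)
    (hlc : ∀ u, 0 ≤ lc u) (hld : ∀ u v, 0 ≤ ld u v)
    (hint : ∀ u, Integrable (fun v => ld u v) ν)
    (jf : (n : ℕ) → (Fin n → Λ) → ℝ)
    (hjf : ∀ (n : ℕ) (u : Fin n → Λ), jf n u = Real.exp (-(ν Set.univ).toReal))
    {m : ℕ} (z : Fin m → Λ) (hz : Function.Injective z)
    (hpos : ∀ k, 0 < lc (z k) + ∫ u, pd * ld (z k) u ∂ν)
    (ρ : Λ → Λ → ℝ)
    (hρ : ∀ x y, ρ x y =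
      ((1 - pd) ^ 2 * ups2 ν lc pd ld jf z Finset.univ x y +
          (1 - pd) * ∑ k : Fin m, (pd * ld (z k) x + pd * ld (z k) y) *
            ups2 ν lc pd ld jf z (Finset.univ \ {k}) x y +
          ∑ k : Fin m, ∑ k' : Fin m,
            if k ≠ k' then
              (pd * ld (z k) x) * (pd * ld (z k') y) *
                ups2 ν lc pd ld jf z (Finset.univ \ {k, k'}) x y
            else 0)
        / jXi ν lc pd ld jf z Finset.univ) :
    ∀ x y, ρ x y = (1 - pd) ^ 2 +
      (1 - pd) * (∑ k : Fin m, (pd * ld (z k) x + pd * ld (z k) y) /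
        (lc (z k) + ∫ u, pd * ld (z k) u ∂ν)) +
      ∑ k : Fin m, ∑ k' : Fin m,
        if k ≠ k' then
          (pd * ld (z k) x) * (pd * ld (z k') y) /
            ((lc (z k) + ∫ u, pd * ld (z k) u ∂ν) *
              (lc (z k') + ∫ u, pd * ld (z k') u ∂ν))
        else 0 :=
  poisson_posterior_second_moment_general ν pd lc ld jf hjf z hpos ρ hρ
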